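/- Let V be a 𝔤-module, 𝔤 = 𝔰𝔳(0), which is a free U(𝔥)-module of rank 1 with generator w. Then ρ(M_m)·w ≠ 0 for every m ∈ ℤ (equivalently, the polynomial a_m representing M_m·w is nonzero for every m). -/

import Mathlib

/-!
`M₀·w ≠ 0` because `M₀·w` is the image of the nonzero polynomial `y`. If `M_m·w = 0`, then
`ker ρ(M_m)` contains `w` and is stable under `ρ(L₀), ρ(M₀), ρ(Y₀)`, since each of these
brackets `M_m` into `ℂ M_m`; as `V = ℂ[ρL₀, ρM₀, ρY₀]·w`, `M_m` acts by zero on `V`. Then so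
does `⁅L_{-m}, M_m⁆ = m M₀`, which for `m ≠ 0` contradicts `M₀·w ≠ 0`.
-/

/-- Evaluation of a polynomial `u(x,y,z)` at three operators `A, B, C`, applied to a
vector `w`: `u(A,B,C)·w` (when `A,B,C` pairwise commute, this is the usual substitution). -/
noncomputable def evalP {V : Type*} [AddCommGroup V] [Module ℂ V]
    (A B C : Module.End ℂ V) (w : V) (u : MvPolynomial (Fin 3) ℂ) : V :=
  (AddMonoidAlgebra.coeff u).sum fun d c => c • ((A ^ d 0 * B ^ d 1 * C ^ d 2) w)

section evalP

variable {V : Type*} [AddCommGroup V] [Module ℂ V] (A B C : Module.End ℂ V) (w : V)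

theorem evalP_zero : evalP A B C w 0 = 0 := by
  simp [evalP]

theorem evalP_X_one : evalP A B C w (MvPolynomial.X 1) = B w := by
  rw [evalP, show AddMonoidAlgebra.coeff (MvPolynomial.X 1 : MvPolynomial (Fin 3) ℂ) =
      Finsupp.single (Finsupp.single 1 1) 1 from rfl, Finsupp.sum_single_index (by simp)]
  simp

variable {A B C w}

theorem evalP_mem {p : Submodule ℂ V} (hA : Set.MapsTo A p p) (hB : Set.MapsTo B p p)
    (hC : Set.MapsTo C p p) (hw : w ∈ p) (u : MvPolynomial (Fin 3) ℂ) :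
    evalP A B C w u ∈ p := by
  refine Submodule.finsuppSum_mem _ _ _ _ fun d _ => p.smul_mem _ ?_
  simp only [Module.End.mul_apply, Module.End.coe_pow]
  exact (hA.iterate _) ((hB.iterate _) ((hC.iterate _) hw))

end evalP

section LieModule

variable {R L M : Type*} [CommRing R] [LieRing L] [LieAlgebra R L] [AddCommGroup M] [Module R M]
  [LieRingModule L M] [LieModule R L M]

theorem LieModule.mapsTo_ker_toEnd_of_lie_eq_smul {x y : L} {c : R} (h : ⁅y, x⁆ = c • x) :
    Set.MapsTo (LieModule.toEnd R L M y) (LinearMap.ker (LieModule.toEnd R L M x))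
      (LinearMap.ker (LieModule.toEnd R L M x)) := by
  intro v hv
  simp only [SetLike.mem_coe, LinearMap.mem_ker, LieModule.toEnd_apply_apply] at hv ⊢
  rw [leibniz_lie, hv, lie_zero, add_zero, ← lie_skew, h, neg_lie, smul_lie, hv, smul_zero,
    neg_zero]

end LieModule

theorem stmt13_general
    -- `𝔤 = 𝔰𝔳(0)`: a complex Lie algebra with basis `{L n, M n, Y n : n ∈ ℤ}` ...
    (g : Type*) [LieRing g] [LieAlgebra ℂ g] (L M Y : ℤ → g)
    -- ... and the following brackets:
    (hLM : ∀ n m : ℤ, ⁅L n, M m⁆ = (m : ℂ) • M (m + n))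
    (hYM : ∀ n m : ℤ, ⁅Y n, M m⁆ = 0)
    (hMM : ∀ n m : ℤ, ⁅M n, M m⁆ = 0)
    -- a `𝔤`-module `V`:
    (V : Type*) [AddCommGroup V] [Module ℂ V] [LieRingModule g V] [LieModule ℂ g V]
    (w : V)
    (hfree : Function.Bijective (evalP (LieModule.toEnd ℂ g V (L 0))
      (LieModule.toEnd ℂ g V (M 0)) (LieModule.toEnd ℂ g V (Y 0)) w)) :
    ∀ m : ℤ, ⁅M m, w⁆ ≠ 0 := by
  have hM₀w : ⁅M 0, w⁆ ≠ 0 := fun h => MvPolynomial.X_ne_zero (1 : Fin 3) <| hfree.injective <| by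
    rw [evalP_X_one, evalP_zero, LieModule.toEnd_apply_apply, h]
  intro m hMmw
  have hm : m ≠ 0 := by rintro rfl; exact hM₀w hMmw
  have hker : M m ∈ LieModule.ker ℂ g V := by
    rw [LieModule.mem_ker]
    intro v
    obtain ⟨u, rfl⟩ := hfree.surjective v
    refine evalP_mem (p := LinearMap.ker (LieModule.toEnd ℂ g V (M m))) ?_ ?_ ?_ hMmw u
    · exact LieModule.mapsTo_ker_toEnd_of_lie_eq_smul (c := (m : ℂ)) (by simpa using hLM 0 m)
    · exact LieModule.mapsTo_ker_toEnd_of_lie_eq_smul (c := (0 : ℂ)) (by simpa using hMM 0 m)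
    · exact LieModule.mapsTo_ker_toEnd_of_lie_eq_smul (c := (0 : ℂ)) (by simpa using hYM 0 m)
  have hM₀ : (m : ℂ) • M 0 ∈ LieModule.ker ℂ g V := by
    have := (LieModule.ker ℂ g V).lie_mem (x := L (-m)) hker
    rwa [hLM, add_neg_cancel] at this
  have hmM₀w : (m : ℂ) • ⁅M 0, w⁆ = 0 := by
    rw [← smul_lie]
    exact (LieModule.mem_ker ℂ g V _).mp hM₀ w
  exact hM₀w ((smul_eq_zero.mp hmM₀w).resolve_left (by exact_mod_cast hm))

/-- If the `𝔰𝔳(0)`-module `V` is a free `U(𝔥)`-module of rank 1 with generator `w`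
(i.e. `p ↦ p(ρL₀,ρM₀,ρY₀)·w` is a bijection `ℂ[x,y,z] → V`), then `ρ(M_m)·w ≠ 0`
for every `m ∈ ℤ`. -/
theorem stmt13
    -- `𝔤 = 𝔰𝔳(0)`: a complex Lie algebra with basis `{L n, M n, Y n : n ∈ ℤ}` ...
    (g : Type*) [LieRing g] [LieAlgebra ℂ g] (L M Y : ℤ → g)
    (B : Module.Basis (Fin 3 × ℤ) ℂ g)
    (hB : ∀ n : ℤ, B (0, n) = L n ∧ B (1, n) = M n ∧ B (2, n) = Y n)
    -- ... and the following brackets: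
    (hLL : ∀ n m : ℤ, ⁅L n, L m⁆ = (((m : ℂ) - (n : ℂ))) • L (m + n))
    (hLY : ∀ n m : ℤ, ⁅L n, Y m⁆ = ((m : ℂ) - (n : ℂ) / 2) • Y (m + n))
    (hLM : ∀ n m : ℤ, ⁅L n, M m⁆ = (m : ℂ) • M (m + n))
    (hYY : ∀ n m : ℤ, ⁅Y n, Y m⁆ = (((m : ℂ) - (n : ℂ))) • M (m + n))
    (hYM : ∀ n m : ℤ, ⁅Y n, M m⁆ = 0)
    (hMM : ∀ n m : ℤ, ⁅M n, M m⁆ = 0)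
    -- a `𝔤`-module `V`:
    (V : Type*) [AddCommGroup V] [Module ℂ V] [LieRingModule g V] [LieModule ℂ g V]
    (w : V)
    (hfree : Function.Bijective (evalP (LieModule.toEnd ℂ g V (L 0))
      (LieModule.toEnd ℂ g V (M 0)) (LieModule.toEnd ℂ g V (Y 0)) w)) :
    ∀ m : ℤ, ⁅M m, w⁆ ≠ 0 :=
  stmt13_general g L M Y hLM hYM hMM V w hfree
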